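/- Let n ≥ 0 be an integer, let q_{2n+1}(t) = (1−t²) P′_{2n+1}(t) / P′_{2n+1}(0), and define A(z) = Σ_{k=0}^{n+1} (−1)^k z^{2n+2−2k} q_{2n+1}^{(2k)}(0), B(z) = Σ_{k=0}^{n+1} (−1)^k z^{2n+2−2k} q_{2n+1}^{(2k)}(1), C(z) = Σ_{k=0}^{n} (−1)^{k+1} z^{2n+1−2k} q_{2n+1}^{(2k+1)}(1). Then the function g(z) = A(z) − B(z) cos z − C(z) sin z has vanishing j-th derivative at z = 0 for every j ≤ 2n+3. -/

import Mathlib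

/-!
Write `N = 2n + 2` and `Pₐ(z) = ∑_{m ≤ N} iᵐ q⁽ᵐ⁾(a) z^{N-m}` (`boundaryPoly q N a`). For real `z`,
`A = Re P₀`, while `B` and `-C` are the real and imaginary parts of `P₁`, so `g` is the real part of
`h(z) = P₀(z) - e^{iz} P₁(z)` (`boundaryDiff q N`). Since `deg q ≤ N`, the `t`-derivative of
`e^{izt} ∑ₘ iᵐ q⁽ᵐ⁾(t) z^{N-m}` telescopes to `i z^{N+1} q(t) e^{izt}`, so
`h(z) = -i z^{N+1} ∫₀¹ q(t) e^{izt} dt`: the derivatives `h⁽ʲ⁾(0)` vanish for `j ≤ N`, and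
`h⁽ᴺ⁺¹⁾(0)` is purely imaginary. Without the integral: for `j ≤ N` the Leibniz expansion of
`h⁽ʲ⁾(0)` is, up to the factor `j! i^{N-j}`, Taylor's formula for `q⁽ᴺ⁻ʲ⁾` around `1` evaluated
at `0`.
-/

open Real Polynomial

/-- The Legendre polynomial of degree `m`, given by its explicit formula. -/
noncomputable def legendreP (m : ℕ) : Polynomial ℝ :=
  Polynomial.C (((2 : ℝ) ^ m)⁻¹) *
    ∑ k ∈ Finset.range (m / 2 + 1),
      Polynomial.C ((-1 : ℝ) ^ k * (Nat.factorial (2 * m - 2 * k) : ℝ) /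
          ((Nat.factorial k : ℝ) * (Nat.factorial (m - k) : ℝ) *
            (Nat.factorial (m - 2 * k) : ℝ))) *
        Polynomial.X ^ (m - 2 * k)

theorem sum_range_two_mul_add_one_eq_even_add_odd {M : Type*} [AddCommMonoid M] (m : ℕ)
    (f : ℕ → M) :
    ∑ r ∈ Finset.range (2 * m + 1), f r
      = ∑ k ∈ Finset.range (m + 1), f (2 * k) + ∑ k ∈ Finset.range m, f (2 * k + 1) := by
  induction m with
  | zero => simp
  | succ m ih =>
    rw [show 2 * (m + 1) + 1 = 2 * m + 1 + 1 + 1 by ring, Finset.sum_range_succ,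
      Finset.sum_range_succ, ih, Finset.sum_range_succ (fun k => f (2 * k)) (m + 1),
      Finset.sum_range_succ (fun k => f (2 * k + 1)) m, show 2 * m + 1 + 1 = 2 * (m + 1) by ring]
    abel

namespace Polynomial

theorem iterate_derivative_eval_zero {R : Type*} [CommSemiring R] (p : R[X]) (k : ℕ) :
    (derivative^[k] p).eval 0 = k.factorial * p.coeff k := by
  rw [← coeff_zero_eq_eval_zero, coeff_iterate_derivative, zero_add, Nat.descFactorial_self,
    nsmul_eq_mul]

theorem iteratedDeriv_eval {𝕜 : Type*} [NontriviallyNormedField 𝕜] (p : 𝕜[X]) (k : ℕ) :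
    iteratedDeriv k (fun x => p.eval x) = fun x => (derivative^[k] p).eval x := by
  induction k with
  | zero => simp
  | succ k ih =>
    rw [iteratedDeriv_succ, ih]
    funext x
    rw [Polynomial.deriv, Function.iterate_succ_apply']

theorem contDiff_eval {𝕜 : Type*} [NontriviallyNormedField 𝕜] (p : 𝕜[X]) (n : WithTop ℕ∞) :
    ContDiff 𝕜 n fun x => p.eval x := by
  simpa using p.contDiff_aeval (𝕜 := 𝕜) n

theorem eval_eq_sum_range_hasseDeriv {R : Type*} [CommRing R] {f : R[X]} {j : ℕ}
    (hf : f.natDegree ≤ j) (x y : R) :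
    f.eval y = ∑ s ∈ Finset.range (j + 1), (hasseDeriv s f).eval x * (y - x) ^ s := by
  rw [← sub_add_cancel y x, ← taylor_eval,
    eval_eq_sum_range' ((natDegree_taylor f x).trans_lt (Nat.lt_succ_of_le hf))]
  simp [taylor_coeff]

end Polynomial

theorem iteratedDeriv_re_comp_ofReal {f : ℂ → ℂ} (hf : ContDiff ℂ ⊤ f) (j : ℕ) (x : ℝ) :
    iteratedDeriv j (fun x : ℝ => (f x).re) x = (iteratedDeriv j f x).re := by
  induction j generalizing x with
  | zero => simp
  | succ j ih =>
    rw [iteratedDeriv_succ, funext ih, iteratedDeriv_succ]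
    exact ((hf.differentiable_iteratedDeriv j (WithTop.coe_lt_top _)) x).hasDerivAt
      |>.real_of_complex.deriv

theorem iteratedDeriv_cexp_mul_eval_zero (c : ℂ) (P : ℂ[X]) (j : ℕ) :
    iteratedDeriv j (fun z => Complex.exp (c * z) * P.eval z) 0
      = ∑ s ∈ Finset.range (j + 1),
          j.choose s * c ^ s * ((j - s).factorial * P.coeff (j - s)) := by
  have hexp : ContDiff ℂ j fun z => Complex.exp (c * z) := by fun_prop
  rw [iteratedDeriv_fun_mul hexp.contDiffAt (P.contDiff_eval _).contDiffAt]
  simp [Polynomial.iteratedDeriv_eval, Polynomial.iterate_derivative_eval_zero]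

noncomputable def boundaryPoly (q : ℝ[X]) (N : ℕ) (a : ℝ) : ℂ[X] :=
  ∑ m ∈ Finset.range (N + 1),
    C (Complex.I ^ m * (((derivative^[m] q).eval a : ℝ) : ℂ)) * X ^ (N - m)

section boundaryPoly

variable (q : ℝ[X]) (N : ℕ) (a : ℝ)

theorem coeff_boundaryPoly_sub {m : ℕ} (hm : m ≤ N) :
    (boundaryPoly q N a).coeff (N - m) = Complex.I ^ m * (((derivative^[m] q).eval a : ℝ) : ℂ) := by
  rw [boundaryPoly, finsetSum_coeff, Finset.sum_eq_single m]
  · rw [coeff_C_mul_X_pow, if_pos rfl]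
  · intro m' hm' hne
    rw [coeff_C_mul_X_pow, if_neg]
    rw [Finset.mem_range] at hm'
    omega
  · intro h
    exact absurd (Finset.mem_range.mpr (Nat.lt_succ_of_le hm)) h

theorem coeff_boundaryPoly_of_lt {r : ℕ} (hr : N < r) : (boundaryPoly q N a).coeff r = 0 := by
  rw [boundaryPoly, finsetSum_coeff]
  refine Finset.sum_eq_zero fun m _ => ?_
  rw [coeff_C_mul_X_pow, if_neg (by omega)]

theorem boundaryPoly_eval_ofReal (n : ℕ) (x : ℝ) :
    (boundaryPoly q (2 * n + 2) a).eval (x : ℂ)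
      = ((∑ k ∈ Finset.range (n + 2),
            (-1) ^ k * x ^ (2 * n + 2 - 2 * k) * (derivative^[2 * k] q).eval a : ℝ) : ℂ)
        + ((∑ k ∈ Finset.range (n + 1),
            (-1) ^ k * x ^ (2 * n + 1 - 2 * k) * (derivative^[2 * k + 1] q).eval a : ℝ) : ℂ)
          * Complex.I := by
  rw [boundaryPoly, eval_finsetSum, show 2 * n + 2 + 1 = 2 * (n + 1) + 1 by ring,
    sum_range_two_mul_add_one_eq_even_add_odd]
  push_cast
  rw [Finset.sum_mul]
  congr 1 <;> refine Finset.sum_congr rfl fun k hk => ?_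
  · simp only [eval_mul, eval_C, eval_pow, eval_X, pow_mul, Complex.I_sq]
    ring
  · simp only [eval_mul, eval_C, eval_pow, eval_X]
    rw [pow_succ Complex.I, pow_mul, Complex.I_sq]
    ring

end boundaryPoly

noncomputable def boundaryDiff (q : ℝ[X]) (N : ℕ) (z : ℂ) : ℂ :=
  (boundaryPoly q N 0).eval z - Complex.exp (Complex.I * z) * (boundaryPoly q N 1).eval z

section boundaryDiff

variable (q : ℝ[X]) (N : ℕ)

theorem contDiff_boundaryDiff : ContDiff ℂ ⊤ (boundaryDiff q N) := by
  unfold boundaryDiff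
  have h0 := (boundaryPoly q N 0).contDiff_eval ⊤
  have h1 := (boundaryPoly q N 1).contDiff_eval ⊤
  fun_prop

theorem iteratedDeriv_boundaryDiff_zero_eq (j : ℕ) :
    iteratedDeriv j (boundaryDiff q N) 0
      = j.factorial * (boundaryPoly q N 0).coeff j
        - ∑ s ∈ Finset.range (j + 1), j.choose s * Complex.I ^ s
            * ((j - s).factorial * (boundaryPoly q N 1).coeff (j - s)) := by
  have hexp : ContDiff ℂ j fun z => Complex.exp (Complex.I * z) := by fun_prop
  have h1 := ((boundaryPoly q N 1).contDiff_eval j).contDiffAt (x := 0)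
  unfold boundaryDiff
  rw [iteratedDeriv_fun_sub ((boundaryPoly q N 0).contDiff_eval j).contDiffAt
    (hexp.contDiffAt.mul h1), iteratedDeriv_cexp_mul_eval_zero]
  simp only [Polynomial.iteratedDeriv_eval, Polynomial.iterate_derivative_eval_zero]

theorem re_iteratedDeriv_boundaryDiff_succ :
    (iteratedDeriv (N + 1) (boundaryDiff q N) 0).re = 0 := by
  rw [iteratedDeriv_boundaryDiff_zero_eq, coeff_boundaryPoly_of_lt q N 0 N.lt_succ_self,
    mul_zero, zero_sub, Complex.neg_re, Complex.re_sum, neg_eq_zero]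
  refine Finset.sum_eq_zero fun s hs => ?_
  cases s with
  | zero => simp [coeff_boundaryPoly_of_lt q N 1 N.lt_succ_self]
  | succ s =>
    have hc := coeff_boundaryPoly_sub q N 1 (m := s) (by simp at hs; omega)
    have hI : Complex.I ^ s * Complex.I ^ s = (-1) ^ s := by rw [← mul_pow, Complex.I_mul_I]
    have hreal : ((N + 1).choose (s + 1) : ℂ) * Complex.I ^ (s + 1)
          * ((N + 1 - (s + 1)).factorial * (boundaryPoly q N 1).coeff (N + 1 - (s + 1)))
        = (((N + 1).choose (s + 1) * (N - s).factorial * (-1) ^ s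
            * (derivative^[s] q).eval 1 : ℝ) : ℂ) * Complex.I := by
      rw [show N + 1 - (s + 1) = N - s by omega, hc, pow_succ]
      push_cast
      linear_combination ((N + 1).choose (s + 1) * (N - s).factorial
        * (((derivative^[s] q).eval 1 : ℝ) : ℂ) * Complex.I) * hI
    rw [hreal, Complex.re_ofReal_mul, Complex.I_re, mul_zero]

end boundaryDiff

theorem iteratedDeriv_boundaryDiff_zero {q : ℝ[X]} {N j : ℕ} (hq : q.natDegree ≤ N)
    (hj : j ≤ N) : iteratedDeriv j (boundaryDiff q N) 0 = 0 := by
  set f := derivative^[N - j] q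
  have hf : f.natDegree ≤ j := (natDegree_iterate_derivative q _).trans (by omega)
  have hcoeff : (boundaryPoly q N 0).coeff j = Complex.I ^ (N - j) * ((f.eval 0 : ℝ) : ℂ) := by
    have := coeff_boundaryPoly_sub q N 0 (Nat.sub_le N j)
    rwa [Nat.sub_sub_self hj] at this
  have hterm : ∀ s ∈ Finset.range (j + 1),
      j.choose s * Complex.I ^ s * ((j - s).factorial * (boundaryPoly q N 1).coeff (j - s))
        = j.factorial * Complex.I ^ (N - j)
          * (((hasseDeriv s f).eval 1 * (0 - 1) ^ s : ℝ) : ℂ) := by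
    intro s hs
    have hs : s ≤ j := Nat.lt_succ_iff.mp (Finset.mem_range.mp hs)
    have hc : (boundaryPoly q N 1).coeff (j - s)
        = Complex.I ^ (N - j + s) * (((derivative^[s] f).eval 1 : ℝ) : ℂ) := by
      have := coeff_boundaryPoly_sub q N 1 (m := N - j + s) (by omega)
      rwa [show N - (N - j + s) = j - s by omega, add_comm (N - j), Function.iterate_add_apply,
        add_comm s] at this
    have hI : Complex.I ^ s * Complex.I ^ s = (-1) ^ s := by rw [← mul_pow, Complex.I_mul_I]
    rw [hc, ← factorial_smul_hasseDeriv, LinearMap.smul_apply, eval_smul, nsmul_eq_mul,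
      ← Nat.choose_mul_factorial_mul_factorial hs, pow_add]
    push_cast
    linear_combination (j.choose s * (j - s).factorial * s.factorial * Complex.I ^ (N - j)
      * (((hasseDeriv s f).eval 1 : ℝ) : ℂ)) * hI
  rw [iteratedDeriv_boundaryDiff_zero_eq, Finset.sum_congr rfl hterm, ← Finset.mul_sum,
    ← Complex.ofReal_sum, ← eval_eq_sum_range_hasseDeriv hf, hcoeff, mul_assoc, sub_self]

theorem natDegree_legendreP_le (m : ℕ) : (legendreP m).natDegree ≤ m := by
  refine (natDegree_C_mul_le _ _).trans (natDegree_sum_le_of_forall_le _ _ fun k _ => ?_)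
  refine (natDegree_C_mul_le _ _).trans ?_
  rw [natDegree_X_pow]
  omega

theorem natDegree_C_mul_one_sub_X_sq_mul_derivative_legendreP_le (c : ℝ) {m : ℕ} (hm : 0 < m) :
    (C c * ((1 - X ^ 2) * derivative (legendreP m))).natDegree ≤ m + 1 := by
  have h1 : ((1 : ℝ[X]) - X ^ 2).natDegree ≤ 2 := (natDegree_sub_le _ _).trans (by simp)
  have h2 := (natDegree_derivative_le (legendreP m)).trans
    (Nat.sub_le_sub_right (natDegree_legendreP_le m) 1)
  exact (natDegree_C_mul_le _ _).trans (natDegree_mul_le.trans (by omega))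

theorem re_boundaryDiff_ofReal (q : ℝ[X]) (n : ℕ) (x : ℝ) :
    (boundaryDiff q (2 * n + 2) x).re
      = (∑ k ∈ Finset.range (n + 2),
            (-1) ^ k * x ^ (2 * n + 2 - 2 * k) * (derivative^[2 * k] q).eval 0)
        - (∑ k ∈ Finset.range (n + 2),
            (-1) ^ k * x ^ (2 * n + 2 - 2 * k) * (derivative^[2 * k] q).eval 1) * Real.cos x
        - (∑ k ∈ Finset.range (n + 1),
            (-1) ^ (k + 1) * x ^ (2 * n + 1 - 2 * k) * (derivative^[2 * k + 1] q).eval 1)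
          * Real.sin x := by
  have hodd : ∑ k ∈ Finset.range (n + 1),
        (-1) ^ (k + 1) * x ^ (2 * n + 1 - 2 * k) * (derivative^[2 * k + 1] q).eval 1
      = -∑ k ∈ Finset.range (n + 1),
        (-1) ^ k * x ^ (2 * n + 1 - 2 * k) * (derivative^[2 * k + 1] q).eval 1 := by
    rw [← Finset.sum_neg_distrib]
    exact Finset.sum_congr rfl fun k _ => by ring
  rw [hodd, boundaryDiff, boundaryPoly_eval_ofReal, boundaryPoly_eval_ofReal, mul_comm Complex.I,
    Complex.exp_mul_I, ← Complex.ofReal_cos, ← Complex.ofReal_sin]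
  simp only [Complex.sub_re, Complex.add_re, Complex.mul_re, Complex.ofReal_re,
    Complex.ofReal_im, Complex.I_re, Complex.I_im, Complex.add_im, Complex.mul_im]
  ring

theorem stmt10 (n : ℕ)
    (q : Polynomial ℝ)
    (hq : q = Polynomial.C (((Polynomial.derivative (legendreP (2 * n + 1))).eval 0)⁻¹) *
      ((1 - Polynomial.X ^ 2) * Polynomial.derivative (legendreP (2 * n + 1))))
    (A B C : ℝ → ℝ)
    (hA : A = fun z => ∑ k ∈ Finset.range (n + 2),
      (-1 : ℝ) ^ k * z ^ (2 * n + 2 - 2 * k) * (Polynomial.derivative^[2 * k] q).eval 0)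
    (hB : B = fun z => ∑ k ∈ Finset.range (n + 2),
      (-1 : ℝ) ^ k * z ^ (2 * n + 2 - 2 * k) * (Polynomial.derivative^[2 * k] q).eval 1)
    (hC : C = fun z => ∑ k ∈ Finset.range (n + 1),
      (-1 : ℝ) ^ (k + 1) * z ^ (2 * n + 1 - 2 * k) * (Polynomial.derivative^[2 * k + 1] q).eval 1) :
    ∀ j : ℕ, j ≤ 2 * n + 3 →
      iteratedDeriv j (fun z : ℝ => A z - B z * Real.cos z - C z * Real.sin z) 0 = 0 := by
  intro j hj
  have hdeg : q.natDegree ≤ 2 * n + 2 :=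
    hq ▸ natDegree_C_mul_one_sub_X_sq_mul_derivative_legendreP_le _ (Nat.succ_pos _)
  have hre : (fun z : ℝ => A z - B z * Real.cos z - C z * Real.sin z)
      = fun x : ℝ => (boundaryDiff q (2 * n + 2) x).re := by
    subst hA hB hC
    exact funext fun x => (re_boundaryDiff_ofReal q n x).symm
  rw [hre, iteratedDeriv_re_comp_ofReal (contDiff_boundaryDiff q _), Complex.ofReal_zero]
  rcases Nat.lt_or_eq_of_le hj with hj | rfl
  · rw [iteratedDeriv_boundaryDiff_zero hdeg (by omega), Complex.zero_re]
  · exact re_iteratedDeriv_boundaryDiff_succ q (2 * n + 2)
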